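/- arXiv:2402.07811 — 4 statements merged into one kernel-verified Lean document; each statement's English description precedes it below -/
import Mathlib

section
/- Let C = D S be quasi-symmetric, with D a positive diagonal matrix and S a symmetric matrix, such that all column sums of C are positive. Let A be the diagonal matrix of column sums of C and let d be the vector of diagonal entries of D. Then A⁻¹ C d = d, i.e., d is an eigenvector of A⁻¹C with eigenvalue 1. -/
/-!
For `C = diag(d) S` with `S` symmetric, both `(C d)_i = d_i (S d)_i` and the `i`-th column sum
`∑ₖ d_k S_{ki} = (S d)_i` involve the same vector `S d`, so `C d = A d`; inverting `A` gives the claim.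
-/

open Matrix

theorem Matrix.IsSymm.diagonal_mul_mulVec_eq {ι R : Type*} [Fintype ι] [DecidableEq ι]
    [CommSemiring R] {S : Matrix ι ι R} (hS : S.IsSymm) (d : ι → R) :
    (diagonal d * S) *ᵥ d = diagonal (fun j => ∑ i, (diagonal d * S) i j) *ᵥ d := by
  have hcol : (fun j => ∑ i, (diagonal d * S) i j) = S *ᵥ d := by
    funext j
    simp only [diagonal_mul, mulVec, dotProduct]
    exact Finset.sum_congr rfl fun i _ => by rw [hS.apply, mul_comm]
  ext i
  rw [hcol, ← mulVec_mulVec, mulVec_diagonal, mulVec_diagonal, mul_comm]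

theorem Matrix.inv_mul_mulVec_eq_of_mulVec_eq {ι R : Type*} [Fintype ι] [DecidableEq ι]
    [CommRing R] {A C : Matrix ι ι R} {x : ι → R} (hA : IsUnit A.det) (h : C *ᵥ x = A *ᵥ x) :
    (A⁻¹ * C) *ᵥ x = x := by
  rw [← mulVec_mulVec, h, mulVec_mulVec, nonsing_inv_mul _ hA, one_mulVec]

theorem quasisymm_d_is_eigenvector_general {n : ℕ}
    (d : Fin n → ℝ) (S C : Matrix (Fin n) (Fin n) ℝ)
    (hS : S.IsSymm)
    (hC : C = Matrix.diagonal d * S)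
    (hcol : ∀ j, 0 < ∑ i, C i j) :
    let A : Matrix (Fin n) (Fin n) ℝ := Matrix.diagonal (fun j => ∑ i, C i j)
    (A⁻¹ * C).mulVec d = d := by
  intro A
  have hA : IsUnit A.det := by
    rw [det_diagonal]
    exact (Finset.prod_ne_zero_iff.mpr fun j _ => (hcol j).ne').isUnit
  subst hC
  exact inv_mul_mulVec_eq_of_mulVec_eq hA (hS.diagonal_mul_mulVec_eq d)

theorem quasisymm_d_is_eigenvector {n : ℕ}
    (d : Fin n → ℝ) (S C : Matrix (Fin n) (Fin n) ℝ)
    (hd : ∀ i, 0 < d i) (hS : S.IsSymm)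
    (hC : C = Matrix.diagonal d * S)
    (hcol : ∀ j, 0 < ∑ i, C i j) :
    let A : Matrix (Fin n) (Fin n) ℝ := Matrix.diagonal (fun j => ∑ i, C i j)
    (A⁻¹ * C).mulVec d = d :=
  quasisymm_d_is_eigenvector_general d S C hS hC hcol
end

section
/- Let P be a column-stochastic matrix with strictly positive entries satisfying p_{ij} p_{jk} p_{ki} = p_{ji} p_{kj} p_{ik} for all triples i, j, k. Then there exists a strictly positive probability vector π such that π_j p_{ij} = π_i p_{ji} for all i, j (that is, P is reversible with respect to π), and consequently Pπ = π. -/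
open Matrix

theorem kolmogorov_implies_reversible {n : ℕ} (hn : 0 < n)
    (P : Matrix (Fin n) (Fin n) ℝ) (hP : ∀ i j, 0 < P i j)
    (hstoch : ∀ j, ∑ i, P i j = 1)
    (hk : ∀ i j k : Fin n, P i j * P j k * P k i = P j i * P k j * P i k) :
    ∃ π : Fin n → ℝ, (∀ i, 0 < π i) ∧ (∑ i, π i = 1) ∧
      (∀ i j, π j * P i j = π i * P j i) ∧ P.mulVec π = π := by
  obtain ⟨z⟩ : Nonempty (Fin n) := ⟨⟨0, hn⟩⟩
  have hwpos : ∀ i, 0 < P i z / P z i := fun i => div_pos (hP i z) (hP z i)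
  have hSpos : 0 < ∑ i, P i z / P z i :=
    Finset.sum_pos (fun i _ => hwpos i) ⟨z, Finset.mem_univ z⟩
  have hbal : ∀ i j, (P j z / P z j) / (∑ i, P i z / P z i) * P i j
      = (P i z / P z i) / (∑ i, P i z / P z i) * P j i := by
    intro i j
    have hw : P j z / P z j * P i j = P i z / P z i * P j i := by
      rw [div_mul_eq_mul_div, div_mul_eq_mul_div,
        div_eq_div_iff (hP z j).ne' (hP z i).ne']
      linear_combination hk i j z
    linear_combination hw / (∑ i : Fin n, P i z / P z i)
  refine ⟨fun i => (P i z / P z i) / (∑ i, P i z / P z i),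
    fun i => div_pos (hwpos i) hSpos, ?_, hbal, ?_⟩
  · rw [← Finset.sum_div, div_self hSpos.ne']
  · funext i
    simp only [mulVec, dotProduct]
    calc ∑ j, P i j * ((P j z / P z j) / (∑ i, P i z / P z i))
        = ∑ j, (P i z / P z i) / (∑ i, P i z / P z i) * P j i := by
          refine Finset.sum_congr rfl fun j _ => ?_
          rw [mul_comm]; exact hbal i j
      _ = (P i z / P z i) / (∑ i, P i z / P z i) * ∑ j, P j i := by
          rw [Finset.mul_sum]
      _ = _ := by rw [hstoch i, mul_one]
end

section
/- Influence weight is invariant to self-citations: let C be a positive quasi-symmetric matrix C = D S (D positive diagonal, S symmetric) with diagonal matrix of column sums A, normalized so the leading eigenvector of A⁻¹C equal to the diagonal d of D. If C' = C + T where T is any nonnegative diagonal matrix, then C' is also quasi-symmetric with the same diagonal factor up to the decomposition C' = D S' where S' = S + D⁻¹T is symmetric; hence d remains an eigenvector with eigenvalue 1 of A'⁻¹C' where A' = diag of column sums of C'. -/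
/-!
Writing `C = D S`, the `j`-th entry of `C d` is `d j * ∑ k, S j k * d k`, while the `j`-th column
sum of `C` is `∑ i, d i * S i j`; symmetry of `S` makes these sums equal, so `C d = A d` for the
diagonal matrix `A` of column sums. Adding a nonnegative diagonal `T` to `C` keeps this shape, with
`S' = S + D⁻¹ T` still symmetric and the column sums still positive.
-/

open Matrix

namespace Matrix

variable {ι K : Type*} [Fintype ι] [DecidableEq ι]

theorem sum_diagonal_mul_apply [NonUnitalNonAssocSemiring K] (d : ι → K) (S : Matrix ι ι K)
    (j : ι) : ∑ i, (diagonal d * S) i j = (d ᵥ* S) j := by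
  simp only [diagonal_mul, vecMul, dotProduct]

theorem sum_add_diagonal_apply [AddCommMonoid K] (C : Matrix ι ι K) (t : ι → K) (j : ι) :
    ∑ i, (C + diagonal t) i j = ∑ i, C i j + t j := by
  simp only [add_apply, Finset.sum_add_distrib, diagonal_apply, Finset.sum_ite_eq',
    Finset.mem_univ, if_true]

theorem diagonal_mul_mulVec_apply_of_isSymm [CommSemiring K] {S : Matrix ι ι K} (hS : S.IsSymm)
    (d : ι → K) (j : ι) : ((diagonal d * S) *ᵥ d) j = (∑ i, (diagonal d * S) i j) * d j := by
  rw [sum_diagonal_mul_apply, ← mulVec_mulVec, mulVec_diagonal, ← vecMul_transpose, hS.eq,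
    mul_comm]

theorem inv_diagonal_of_ne_zero [Field K] {v : ι → K} (hv : ∀ i, v i ≠ 0) :
    (diagonal v)⁻¹ = diagonal fun i => (v i)⁻¹ := by
  refine inv_eq_left_inv ?_
  rw [diagonal_mul_diagonal, ← diagonal_one]
  exact congrArg diagonal (funext fun i => inv_mul_cancel₀ (hv i))

theorem inv_diagonal_colSum_mul_mulVec_of_isSymm [Field K] {S : Matrix ι ι K} (hS : S.IsSymm)
    (d : ι → K) (h : ∀ j, ∑ i, (diagonal d * S) i j ≠ 0) :
    ((diagonal fun j => ∑ i, (diagonal d * S) i j)⁻¹ * (diagonal d * S)) *ᵥ d = d := by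
  ext j
  rw [inv_diagonal_of_ne_zero h, ← mulVec_mulVec, mulVec_diagonal,
    diagonal_mul_mulVec_apply_of_isSymm hS, inv_mul_cancel_left₀ (h j)]

theorem diagonal_mul_add_diagonal_div [Field K] {d : ι → K} (hd : ∀ i, d i ≠ 0)
    (S : Matrix ι ι K) (t : ι → K) :
    diagonal d * (S + diagonal fun i => t i / d i) = diagonal d * S + diagonal t := by
  rw [mul_add, diagonal_mul_diagonal]
  congr 2
  funext i
  exact mul_div_cancel₀ (t i) (hd i)

end Matrix

theorem influence_weight_self_citation_invariant {n : ℕ}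
    (d : Fin n → ℝ) (S C : Matrix (Fin n) (Fin n) ℝ)
    (hd : ∀ i, 0 < d i) (hS : S.IsSymm) (hSpos : ∀ i j, 0 < S i j)
    (hC : C = Matrix.diagonal d * S)
    (t : Fin n → ℝ) (ht : ∀ i, 0 ≤ t i) :
    let C' : Matrix (Fin n) (Fin n) ℝ := C + Matrix.diagonal t
    let S' : Matrix (Fin n) (Fin n) ℝ := S + Matrix.diagonal (fun i => t i / d i)
    let A' : Matrix (Fin n) (Fin n) ℝ := Matrix.diagonal (fun j => ∑ i, C' i j)
    S'.IsSymm ∧ C' = Matrix.diagonal d * S' ∧ (A'⁻¹ * C').mulVec d = d := by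
  intro C' S' A'
  have hS' : S'.IsSymm := hS.add (isSymm_diagonal _)
  have hC' : C' = diagonal d * S' := by
    rw [diagonal_mul_add_diagonal_div (fun i => (hd i).ne'), ← hC]
  have hcol : ∀ j, 0 < ∑ i, C' i j := fun j => by
    have hC_col : 0 < ∑ i, C i j := Finset.sum_pos
      (fun i _ => by rw [hC, diagonal_mul]; exact mul_pos (hd i) (hSpos i j))
      ⟨j, Finset.mem_univ j⟩
    rw [sum_add_diagonal_apply]
    exact add_pos_of_pos_of_nonneg hC_col (ht j)
  refine ⟨hS', hC', ?_⟩
  show ((diagonal fun j => ∑ i, C' i j)⁻¹ * C') *ᵥ d = d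
  rw [hC'] at hcol ⊢
  exact inv_diagonal_colSum_mul_mulVec_of_isSymm hS' d fun j => (hcol j).ne'
end

section
/- Let C = D S be quasi-symmetric with positive entries, D = diag(d) positive diagonal, S symmetric, and A the diagonal matrix of column sums of C. Then the vector A d (componentwise product of column sums with d) is an eigenvector of the column-stochastic matrix C A⁻¹ with eigenvalue 1; i.e., undamped PageRank π is proportional to A d. -/
/-! Since `A⁻¹ A = 1`, the claim reduces to `C d = A d`. Both sides have `i`-th entry
`∑ⱼ dᵢ Sᵢⱼ dⱼ` resp. `∑ⱼ dⱼ Sⱼᵢ dᵢ`, which agree because `S` is symmetric. -/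

open Matrix

namespace Matrix
variable {n R : Type*} [Fintype n] [DecidableEq n]

theorem mulVec_mul_nonsing_inv_mulVec [CommRing R] {A : Matrix n n R} (hA : IsUnit A.det)
    (C : Matrix n n R) (v : n → R) : (C * A⁻¹) *ᵥ (A *ᵥ v) = C *ᵥ v := by
  rw [mulVec_mulVec, Matrix.mul_assoc, nonsing_inv_mul A hA, Matrix.mul_one]

theorem diagonal_mul_mulVec_self_of_isSymm [CommSemiring R] (d : n → R) {S : Matrix n n R}
    (hS : S.IsSymm) :
    (diagonal d * S) *ᵥ d = diagonal (fun j => ∑ i, (diagonal d * S) i j) *ᵥ d := by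
  ext i
  rw [mulVec_diagonal]
  simp only [diagonal_mul, mulVec, dotProduct, Finset.sum_mul]
  refine Finset.sum_congr rfl fun j _ => ?_
  rw [hS.apply j i]
  ring

end Matrix

theorem Ad_is_pagerank_eigenvector_general {n : ℕ}
    (d : Fin n → ℝ) (S C : Matrix (Fin n) (Fin n) ℝ)
    (hS : S.IsSymm)
    (hC : C = Matrix.diagonal d * S) (hCpos : ∀ i j, 0 < C i j) :
    let A : Matrix (Fin n) (Fin n) ℝ := Matrix.diagonal (fun j => ∑ i, C i j)
    (C * A⁻¹).mulVec (A.mulVec d) = A.mulVec d := by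
  intro A
  have hA : IsUnit A.det := by
    rw [det_diagonal, isUnit_iff_ne_zero, Finset.prod_ne_zero_iff]
    exact fun j _ => (Finset.sum_pos (fun i _ => hCpos i j) ⟨j, Finset.mem_univ j⟩).ne'
  rw [mulVec_mul_nonsing_inv_mulVec hA]
  subst hC
  exact diagonal_mul_mulVec_self_of_isSymm d hS

theorem Ad_is_pagerank_eigenvector {n : ℕ}
    (d : Fin n → ℝ) (S C : Matrix (Fin n) (Fin n) ℝ)
    (hd : ∀ i, 0 < d i) (hS : S.IsSymm)
    (hC : C = Matrix.diagonal d * S) (hCpos : ∀ i j, 0 < C i j) :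
    let A : Matrix (Fin n) (Fin n) ℝ := Matrix.diagonal (fun j => ∑ i, C i j)
    (C * A⁻¹).mulVec (A.mulVec d) = A.mulVec d :=
  Ad_is_pagerank_eigenvector_general d S C hS hC hCpos
end
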